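/- arXiv:2306.08142 — 4 statements merged into one kernel-verified Lean document; each statement's English description precedes it below -/
import Mathlib

section
/- Asymptotics of the confluent hypergeometric function for large negative argument: fix real numbers a, b with b > a > 0, and define ₁F₁(a;b;z) := (Γ(b)/(Γ(a)Γ(b-a))) ∫₀¹ e^{z u} u^{a-1}(1-u)^{b-a-1} du. Then as β → -∞, ₁F₁(a;b;β) - (Γ(b)/Γ(b-a))·|β|^{-a}·(1 - a(b-a-1)/|β|) = O(|β|^{-a-2}); that is, there exist M > 0 and β₀ > 0 such that for all β ≤ -β₀, |₁F₁(a;b;β) - (Γ(b)/Γ(b-a))|β|^{-a}(1 - a(b-a-1)/|β|)| ≤ M·|β|^{-a-2}. -/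
/-!
Write `l = -β` and `c = b - a`. The integral is then `∫₀¹ e^{-lu} u^{a-1} (1-u)^{c-1} du`, and
this is Watson's lemma: near `u = 0` we have `(1-u)^{c-1} = 1 - (c-1)u + O(u²)`, and since
`∫₀^∞ e^{-lu} u^{s-1} du = Γ(s) l^{-s}`, the first two terms produce
`Γ(a) l^{-a} - (c-1) Γ(a+1) l^{-a-1}`, which is the stated main term because `Γ(a+1) = a Γ(a)`,
while the remainder costs `O(Γ(a+2) l^{-a-2})`. Cutting at `u = 1/2`, everything on `u ≥ 1/2`
(the rest of the Beta integral and the tails of the two Gamma integrals) is `O(e^{-l/2})`.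
-/
open Real Set MeasureTheory Filter Asymptotics

lemma integral_exp_neg_mul_mul_rpow_Ioi {s l : ℝ} (hs : 0 < s) (hl : 0 < l) :
    ∫ u in Ioi (0:ℝ), exp (-(l * u)) * u ^ (s - 1) = Gamma s * l ^ (-s) := by
  simp_rw [mul_comm (exp _)]
  rw [integral_rpow_mul_exp_neg_mul_Ioi hs hl, one_div, inv_rpow hl.le, rpow_neg hl.le, mul_comm]

lemma integrableOn_exp_neg_mul_mul_rpow_Ioi {s l : ℝ} (hs : 0 < s) (hl : 0 < l) :
    IntegrableOn (fun u => exp (-(l * u)) * u ^ (s - 1)) (Ioi 0) :=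
  Integrable.of_integral_ne_zero <| by
    rw [integral_exp_neg_mul_mul_rpow_Ioi hs hl]
    exact (mul_pos (Gamma_pos_of_pos hs) (rpow_pos_of_pos hl _)).ne'

lemma intervalIntegrable_rpow_mul_one_sub_rpow {a c : ℝ} (ha : 0 < a) (hc : 0 < c) :
    IntervalIntegrable (fun u => u ^ (a - 1) * (1 - u) ^ (c - 1)) volume 0 1 := by
  refine (Complex.betaIntegral_convergent (u := a) (v := c) (by simpa) (by simpa)).norm.congr_uIoo
    fun u hu => ?_
  rw [uIoo_of_le zero_le_one] at hu
  have h1 : (1 - (u : ℂ)) = ((1 - u : ℝ) : ℂ) := by push_cast; ring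
  simp only [norm_mul, h1]
  rw [Complex.norm_cpow_eq_rpow_re_of_pos hu.1,
    Complex.norm_cpow_eq_rpow_re_of_pos (by linarith [hu.2])]
  simp

lemma integrableOn_exp_neg_mul_mul_rpow_mul_one_sub_rpow {a c l : ℝ} (ha : 0 < a) (hc : 0 < c)
    (hl : 0 ≤ l) :
    IntegrableOn (fun u => exp (-(l * u)) * (u ^ (a - 1) * (1 - u) ^ (c - 1))) (Ioc 0 1) := by
  have hB := (intervalIntegrable_rpow_mul_one_sub_rpow ha hc).1
  refine hB.mono' (by fun_prop) ?_
  filter_upwards [ae_restrict_mem measurableSet_Ioc] with u hu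
  have hB0 : 0 ≤ u ^ (a - 1) * (1 - u) ^ (c - 1) :=
    mul_nonneg (rpow_nonneg hu.1.le _) (rpow_nonneg (by linarith [hu.2]) _)
  rw [norm_mul, norm_of_nonneg (exp_pos _).le, norm_of_nonneg hB0]
  exact mul_le_of_le_one_left hB0 (exp_le_one_iff.2 (by nlinarith [hu.1]))

lemma exists_abs_one_sub_rpow_sub_one_le (q : ℝ) :
    ∃ D ≥ 0, ∀ t ∈ Icc (0:ℝ) (1/2), |(1 - t) ^ q - 1| ≤ D * t := by
  have hcd : ContDiffOn ℝ 1 (fun t : ℝ => (1 - t) ^ q) (Icc 0 (1/2)) :=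
    (contDiffOn_const.sub contDiffOn_id).rpow_const_of_ne fun t ht => by
      simp only [mem_Icc, id] at ht ⊢; linarith
  obtain ⟨K, hK⟩ := hcd.exists_lipschitzOnWith one_ne_zero (convex_Icc _ _) isCompact_Icc
  refine ⟨K, K.2, fun t ht => ?_⟩
  simpa [abs_of_nonneg ht.1, Real.dist_eq] using
    hK.dist_le_mul t ht 0 (left_mem_Icc.2 (by norm_num))

lemma exists_abs_one_sub_rpow_sub_one_add_mul_le (p : ℝ) :
    ∃ K ≥ 0, ∀ t ∈ Icc (0:ℝ) (1/2), |(1 - t) ^ p - 1 + p * t| ≤ K * t ^ 2 := by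
  obtain ⟨D, hD0, hD⟩ := exists_abs_one_sub_rpow_sub_one_le (p - 1)
  refine ⟨|p| * D, by positivity, fun t ht => ?_⟩
  have hderiv : ∀ x ∈ Icc 0 t, HasDerivWithinAt (fun y => (1 - y) ^ p - 1 + p * y)
      (p * (1 - (1 - x) ^ (p - 1))) (Icc 0 t) x := by
    intro x hx
    have hx1 : 1 - x ≠ 0 := by linarith [hx.2, ht.2]
    have h := ((((hasDerivAt_id' x).const_sub 1).rpow_const (p := p) (Or.inl hx1)).sub_const 1).add
      ((hasDerivAt_id' x).const_mul p)
    exact (h.congr_deriv (by ring)).hasDerivWithinAt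
  have hbound : ∀ x ∈ Icc 0 t, ‖p * (1 - (1 - x) ^ (p - 1))‖ ≤ |p| * D * t := by
    intro x hx
    have h := hD x ⟨hx.1, hx.2.trans ht.2⟩
    rw [Real.norm_eq_abs, abs_mul, abs_sub_comm, mul_assoc]
    gcongr
    exact h.trans (mul_le_mul_of_nonneg_left hx.2 hD0)
  have := (convex_Icc 0 t).norm_image_sub_le_of_norm_hasDerivWithin_le hderiv hbound
    (left_mem_Icc.2 ht.1) (right_mem_Icc.2 ht.1)
  simpa [abs_of_nonneg ht.1, sq, mul_assoc] using this

lemma isBigO_setIntegral_exp_neg_mul_of_subset_Ici {S : Set ℝ} {g : ℝ → ℝ}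
    (hS : S ⊆ Ici (1/2)) (hSm : MeasurableSet S) (hg : IntegrableOn (fun u => exp (-u) * g u) S) :
    (fun l => ∫ u in S, exp (-(l * u)) * g u) =O[atTop] fun l => exp (-(1/2) * l) := by
  refine IsBigO.of_bound (exp (1/2) * ∫ u in S, ‖exp (-u) * g u‖) ?_
  filter_upwards [eventually_ge_atTop 1] with l hl
  have hexp : ∀ u ∈ S, exp (-(l * u)) ≤ exp (1/2) * exp (-(1/2) * l) * exp (-u) := by
    intro u hu
    have hu : 1/2 ≤ u := hS hu
    rw [← exp_add, ← exp_add, exp_le_exp]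
    nlinarith
  calc ‖∫ u in S, exp (-(l * u)) * g u‖
      ≤ ∫ u in S, exp (1/2) * exp (-(1/2) * l) * ‖exp (-u) * g u‖ := by
        refine norm_integral_le_of_norm_le (hg.norm.const_mul _) ?_
        filter_upwards [ae_restrict_mem hSm] with u hu
        rw [norm_mul, norm_mul, norm_of_nonneg (exp_pos _).le, norm_of_nonneg (exp_pos _).le,
          ← mul_assoc]
        exact mul_le_mul_of_nonneg_right (hexp u hu) (norm_nonneg _)
    _ = exp (1/2) * (∫ u in S, ‖exp (-u) * g u‖) * ‖exp (-(1/2) * l)‖ := by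
        rw [integral_const_mul, norm_of_nonneg (exp_pos _).le]; ring

lemma isBigO_setIntegral_Ioc_exp_neg_mul_of_abs_le {ψ : ℝ → ℝ} {r s K : ℝ} (hs : 0 < s)
    (hK : 0 ≤ K) (hψ : ∀ u ∈ Ioc 0 r, |ψ u| ≤ K * u ^ (s - 1)) :
    (fun l => ∫ u in Ioc 0 r, exp (-(l * u)) * ψ u) =O[atTop] fun l => l ^ (-s) := by
  refine IsBigO.of_bound (K * Gamma s) ?_
  filter_upwards [eventually_gt_atTop 0] with l hl
  have hw := integrableOn_exp_neg_mul_mul_rpow_Ioi hs hl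
  calc ‖∫ u in Ioc 0 r, exp (-(l * u)) * ψ u‖
      ≤ ∫ u in Ioc 0 r, K * (exp (-(l * u)) * u ^ (s - 1)) := by
        refine norm_integral_le_of_norm_le ((hw.mono_set Ioc_subset_Ioi_self).const_mul K) ?_
        filter_upwards [ae_restrict_mem measurableSet_Ioc] with u hu
        rw [norm_mul, norm_of_nonneg (exp_pos _).le, mul_left_comm]
        exact mul_le_mul_of_nonneg_left (hψ u hu) (exp_pos _).le
    _ ≤ K * ∫ u in Ioi 0, exp (-(l * u)) * u ^ (s - 1) := by
        rw [integral_const_mul]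
        gcongr
        · filter_upwards [ae_restrict_mem measurableSet_Ioi] with u hu
          exact mul_nonneg (exp_pos _).le (rpow_nonneg (le_of_lt hu) _)
        · exact Ioc_subset_Ioi_self
    _ = K * Gamma s * ‖l ^ (-s)‖ := by
        rw [integral_exp_neg_mul_mul_rpow_Ioi hs hl, norm_of_nonneg (rpow_nonneg hl.le _)]; ring

/-- `₁F₁(a; a + c; -l) = Γ(a + c) / (Γ(a) Γ(c)) * betaLaplace a c l`. -/
noncomputable def betaLaplace (a c l : ℝ) : ℝ :=
  ∫ u in (0:ℝ)..1, exp (-(l * u)) * (u ^ (a - 1) * (1 - u) ^ (c - 1))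

lemma betaLaplace_sub_eq {a c l : ℝ} (ha : 0 < a) (hc : 0 < c) (hl : 0 < l) :
    betaLaplace a c l - (Gamma a * l ^ (-a) - (c - 1) * (Gamma (a + 1) * l ^ (-(a + 1)))) =
      (∫ u in Ioc 0 (1/2), exp (-(l * u)) * (u ^ (a - 1) * ((1 - u) ^ (c - 1) - 1 + (c - 1) * u)))
      + (∫ u in Ioc (1/2) 1, exp (-(l * u)) * (u ^ (a - 1) * (1 - u) ^ (c - 1)))
      - (∫ u in Ioi (1/2), exp (-(l * u)) * u ^ (a - 1))
      + (c - 1) * ∫ u in Ioi (1/2), exp (-(l * u)) * u ^ (a + 1 - 1) := by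
  have hf := integrableOn_exp_neg_mul_mul_rpow_mul_one_sub_rpow ha hc hl.le
  have hw₀ := integrableOn_exp_neg_mul_mul_rpow_Ioi ha hl
  have hw₁ := integrableOn_exp_neg_mul_mul_rpow_Ioi (by linarith : 0 < a + 1) hl
  have hhalf : Ioc (0:ℝ) (1/2) ⊆ Ioc 0 1 := Ioc_subset_Ioc_right (by norm_num)
  have hhalf' : Ioc (0:ℝ) (1/2) ⊆ Ioi 0 := Ioc_subset_Ioi_self
  have hsplit_f := setIntegral_union (Ioc_disjoint_Ioc_of_le le_rfl) measurableSet_Ioc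
    (hf.mono_set hhalf) (hf.mono_set (Ioc_subset_Ioc_left (by norm_num)))
  rw [Ioc_union_Ioc_eq_Ioc (by norm_num) (by norm_num)] at hsplit_f
  have hsplit_w : ∀ s : ℝ, 0 < s → ∫ u in Ioi 0, exp (-(l * u)) * u ^ (s - 1) =
      (∫ u in Ioc 0 (1/2), exp (-(l * u)) * u ^ (s - 1)) +
        ∫ u in Ioi (1/2), exp (-(l * u)) * u ^ (s - 1) := by
    intro s hs
    have hw := integrableOn_exp_neg_mul_mul_rpow_Ioi hs hl
    rw [← setIntegral_union Ioc_disjoint_Ioi_same measurableSet_Ioi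
      (hw.mono_set hhalf') (hw.mono_set (Ioi_subset_Ioi (by norm_num))),
      Ioc_union_Ioi_eq_Ioi (by norm_num)]
  have hnear :
      ∫ u in Ioc 0 (1/2), exp (-(l * u)) * (u ^ (a - 1) * ((1 - u) ^ (c - 1) - 1 + (c - 1) * u))
      = (∫ u in Ioc 0 (1/2), exp (-(l * u)) * (u ^ (a - 1) * (1 - u) ^ (c - 1)))
        - (∫ u in Ioc 0 (1/2), exp (-(l * u)) * u ^ (a - 1))
        + (c - 1) * ∫ u in Ioc 0 (1/2), exp (-(l * u)) * u ^ (a + 1 - 1) := by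
    have hF := hf.mono_set hhalf
    have hG := hw₀.mono_set hhalf'
    have hH := (hw₁.mono_set hhalf').const_mul (c - 1)
    rw [← integral_sub hF hG, ← integral_const_mul, ← integral_add (by exact hF.sub hG) hH]
    refine setIntegral_congr_fun measurableSet_Ioc fun u hu => ?_
    rw [add_sub_cancel_right,
      show u ^ a = u ^ (a - 1) * u by rw [← rpow_add_one hu.1.ne', sub_add_cancel]]
    ring
  rw [betaLaplace, intervalIntegral.integral_of_le zero_le_one, hsplit_f,
    ← integral_exp_neg_mul_mul_rpow_Ioi ha hl, hsplit_w a ha,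
    ← integral_exp_neg_mul_mul_rpow_Ioi (by linarith : 0 < a + 1) hl,
    hsplit_w (a + 1) (by linarith), hnear]
  ring

theorem betaLaplace_sub_isBigO {a c : ℝ} (ha : 0 < a) (hc : 0 < c) :
    (fun l => betaLaplace a c l -
        (Gamma a * l ^ (-a) - (c - 1) * (Gamma (a + 1) * l ^ (-(a + 1))))) =O[atTop]
      fun l => l ^ (-(a + 2)) := by
  obtain ⟨K, hK0, hK⟩ := exists_abs_one_sub_rpow_sub_one_add_mul_le (c - 1)
  have hnear := isBigO_setIntegral_Ioc_exp_neg_mul_of_abs_le (r := 1/2)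
    (ψ := fun u => u ^ (a - 1) * ((1 - u) ^ (c - 1) - 1 + (c - 1) * u))
    (by linarith : 0 < a + 2) hK0 fun u hu => by
      rw [abs_mul, abs_of_nonneg (rpow_nonneg hu.1.le _), show a + 2 - 1 = (a - 1) + 2 by ring,
        rpow_add hu.1, rpow_two, mul_left_comm]
      exact mul_le_mul_of_nonneg_left (hK u (Ioc_subset_Icc_self hu)) (rpow_nonneg hu.1.le _)
  have hexp : (fun l : ℝ => exp (-(1/2) * l)) =O[atTop] fun l => l ^ (-(a + 2)) :=
    (isLittleO_exp_neg_mul_rpow_atTop (by norm_num) _).isBigO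
  have hGamma_tail : ∀ s : ℝ, 0 < s →
      (fun l => ∫ u in Ioi (1/2), exp (-(l * u)) * u ^ (s - 1)) =O[atTop]
        fun l => l ^ (-(a + 2)) := fun s hs =>
    (isBigO_setIntegral_exp_neg_mul_of_subset_Ici Ioi_subset_Ici_self measurableSet_Ioi
      ((GammaIntegral_convergent hs).mono_set (Ioi_subset_Ioi (by norm_num)))).trans hexp
  have hbeta : IntegrableOn (fun u => exp (-u) * (u ^ (a - 1) * (1 - u) ^ (c - 1))) (Ioc 0 1) := by
    simpa using integrableOn_exp_neg_mul_mul_rpow_mul_one_sub_rpow (l := 1) ha hc zero_le_one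
  have hbeta_tail :
      (fun l => ∫ u in Ioc (1/2) 1, exp (-(l * u)) * (u ^ (a - 1) * (1 - u) ^ (c - 1))) =O[atTop]
        fun l => l ^ (-(a + 2)) :=
    (isBigO_setIntegral_exp_neg_mul_of_subset_Ici (fun u hu => hu.1.le) measurableSet_Ioc
      (hbeta.mono_set (Ioc_subset_Ioc_left (by norm_num)))).trans hexp
  refine (((hnear.add hbeta_tail).sub (hGamma_tail a ha)).add
    ((hGamma_tail (a + 1) (by linarith)).const_mul_left (c - 1))).congr' ?_ EventuallyEq.rfl
  filter_upwards [eventually_gt_atTop 0] with l hl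
  exact (betaLaplace_sub_eq ha hc hl).symm

/-- Asymptotics of the confluent hypergeometric function
`₁F₁(a;b;z) := (Γ(b)/(Γ(a)Γ(b-a))) ∫₀¹ e^{z u} u^{a-1}(1-u)^{b-a-1} du`
for large negative argument: for `b > a > 0`, as `β → -∞`,
`₁F₁(a;b;β) - (Γ(b)/Γ(b-a))|β|^{-a}(1 - a(b-a-1)/|β|) = O(|β|^{-a-2})`. -/
theorem hyp1F1_asymptotic_neg (a b : ℝ) (ha : 0 < a) (hab : a < b) :
    ∃ M > (0:ℝ), ∃ β₀ > (0:ℝ), ∀ β : ℝ, β ≤ -β₀ →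
      |(Real.Gamma b / (Real.Gamma a * Real.Gamma (b - a))) *
            (∫ u in (0:ℝ)..1, Real.exp (β * u) * u ^ (a - 1) * (1 - u) ^ (b - a - 1)) -
          (Real.Gamma b / Real.Gamma (b - a)) * |β| ^ (-a) * (1 - a * (b - a - 1) / |β|)| ≤
        M * |β| ^ (-a - 2) := by
  have hc : 0 < b - a := sub_pos.2 hab
  obtain ⟨C, hC, hbound⟩ := (betaLaplace_sub_isBigO ha hc).exists_pos
  obtain ⟨L, hL⟩ := eventually_atTop.1 hbound.bound
  have hP : 0 < Gamma b / (Gamma a * Gamma (b - a)) := by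
    have := Gamma_pos_of_pos ha; have := Gamma_pos_of_pos hc
    have := Gamma_pos_of_pos (ha.trans hab); positivity
  refine ⟨_, mul_pos hP hC, max L 1, by positivity, fun β hβ => ?_⟩
  have hl : max L 1 ≤ -β := by linarith
  have hl0 : 0 < -β := by linarith [le_max_right L 1]
  have hint : ∫ u in (0:ℝ)..1, exp (β * u) * u ^ (a - 1) * (1 - u) ^ (b - a - 1) =
      betaLaplace a (b - a) (-β) := by
    simp only [betaLaplace, neg_mul, neg_neg, mul_assoc]
  have hmain_term : Gamma b / Gamma (b - a) * (-β) ^ (-a) * (1 - a * (b - a - 1) / -β) =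
      Gamma b / (Gamma a * Gamma (b - a)) * (Gamma a * (-β) ^ (-a) - (b - a - 1) *
        (Gamma (a + 1) * (-β) ^ (-(a + 1)))) := by
    rw [Gamma_add_one ha.ne', neg_add, rpow_add hl0, rpow_neg_one]
    field_simp [(Gamma_pos_of_pos ha).ne']
  have hbound_at := hL (-β) (le_of_max_le_left hl)
  rw [Real.norm_eq_abs, norm_of_nonneg (rpow_nonneg hl0.le _)] at hbound_at
  rw [abs_of_neg (by linarith : β < 0), hint, hmain_term, ← mul_sub, abs_mul, abs_of_pos hP,
    mul_assoc, show -a - 2 = -(a + 2) by ring]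
  gcongr
end

section
/- Asymptotics of the confluent hypergeometric function with argument growing proportionally to the second parameter, subcritical case: fix real numbers a > 0, b, and β̃ < 1. For natural numbers n with b + n > a, define ₁F₁(a;b+n;β̃n) := (Γ(b+n)/(Γ(a)Γ(b+n-a))) ∫₀¹ e^{β̃ n u} u^{a-1}(1-u)^{b+n-a-1} du. Then lim_{n→∞} ₁F₁(a;b+n;β̃n) = (1-β̃)^{-a}. -/
open Real Filter Topology MeasureTheory Set

/-!
Substituting `t = n u`, the integral `n ^ a ∫₀¹ e^{β n u} u^{a-1} (1-u)^{b+n-a-1} du` becomes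
`∫₀ⁿ e^{β t} t^{a-1} (1 - t/n)^{b+n-a-1} dt`. Since `(1 - t/n)^{n+c} → e^{-t}`, dominated
convergence (with dominating function `t^{a-1} e^{-(1-β) t / 2}`) gives the limit
`∫₀^∞ t^{a-1} e^{-(1-β) t} dt = Γ(a) (1-β)^{-a}`. At `β = 0` the integral is the Beta
integral `Γ(a) Γ(b+n-a) / Γ(b+n)`, so `₁F₁(a; b+n; βn)` is the quotient of the cases `β`
and `0`, and its limit is `Γ(a) (1-β)^{-a} / Γ(a)`.
-/

lemma rpow_one_sub_le_exp_neg_mul {x c : ℝ} (hx : x < 1) (hc : 0 ≤ c) :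
    (1 - x) ^ c ≤ exp (-(c * x)) := by
  calc (1 - x) ^ c ≤ exp (-x) ^ c := rpow_le_rpow (by linarith) (one_sub_le_exp_neg x) hc
    _ = exp (-(c * x)) := by rw [← exp_mul]; ring_nf

lemma tendsto_one_add_div_rpow_add_exp (t c : ℝ) :
    Tendsto (fun x : ℝ => (1 + t / x) ^ (x + c)) atTop (𝓝 (exp t)) := by
  have hbase : Tendsto (fun x : ℝ => 1 + t / x) atTop (𝓝 1) := by
    simpa using tendsto_const_nhds.add ((tendsto_const_nhds (x := t)).div_atTop tendsto_id)
  have hprod := (tendsto_one_add_div_rpow_exp t).mul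
    (hbase.rpow_const (p := c) (Or.inl one_ne_zero))
  rw [one_rpow, mul_one] at hprod
  refine hprod.congr' ?_
  filter_upwards [hbase.eventually (lt_mem_nhds one_pos)] with x hx
  rw [rpow_add (by linarith)]

lemma integral_rpow_mul_one_sub_rpow {p q : ℝ} (hp : 0 < p) (hq : 0 < q) :
    ∫ u in (0:ℝ)..1, u ^ (p - 1) * (1 - u) ^ (q - 1) = Gamma p * Gamma q / Gamma (p + q) := by
  have hbeta := Complex.betaIntegral_eq_Gamma_mul_div (p : ℂ) (q : ℂ) (by simpa) (by simpa)
  rw [← Complex.ofReal_inj]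
  push_cast [← Complex.Gamma_ofReal]
  rw [← hbeta, Complex.betaIntegral, ← intervalIntegral.integral_ofReal]
  refine intervalIntegral.integral_congr fun u hu => ?_
  rw [uIcc_of_le zero_le_one] at hu
  push_cast [Complex.ofReal_cpow hu.1, Complex.ofReal_cpow (sub_nonneg.2 hu.2)]
  rfl

/-- The integrand after the substitution `t = s u`, extended by zero to `(0, ∞)`. -/
noncomputable def rescaledIntegrand (a β d s t : ℝ) : ℝ :=
  (Ioo 0 s).indicator (fun t => exp (β * t) * t ^ (a - 1) * (1 - t / s) ^ (s + d)) t

lemma rpow_mul_integral_eq_integral_rescaledIntegrand (a β d : ℝ) {s : ℝ} (hs : 0 < s) :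
    s ^ a * ∫ u in (0:ℝ)..1, exp (β * s * u) * u ^ (a - 1) * (1 - u) ^ (s + d)
      = ∫ t in Ioi 0, rescaledIntegrand a β d s t := by
  set f := fun u => exp (β * s * u) * u ^ (a - 1) * (1 - u) ^ (s + d)
  have hsub := intervalIntegral.integral_comp_div f (a := 0) (b := s) hs.ne'
  rw [zero_div, div_self hs.ne', smul_eq_mul] at hsub
  have hpoint : ∀ t ∈ uIcc 0 s, s ^ (a - 1) * f (t / s)
      = exp (β * t) * t ^ (a - 1) * (1 - t / s) ^ (s + d) := by
    intro t ht
    rw [uIcc_of_le hs.le] at ht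
    simp only [f, div_rpow ht.1 hs.le]
    field_simp
  calc s ^ a * ∫ u in (0:ℝ)..1, f u = s ^ (a - 1) * ∫ t in (0:ℝ)..s, f (t / s) := by
        rw [hsub, ← mul_assoc, ← rpow_add_one hs.ne', sub_add_cancel]
    _ = ∫ t in Ioo 0 s, exp (β * t) * t ^ (a - 1) * (1 - t / s) ^ (s + d) := by
        rw [← intervalIntegral.integral_const_mul, intervalIntegral.integral_congr hpoint,
          intervalIntegral.integral_of_le hs.le, integral_Ioc_eq_integral_Ioo]
    _ = ∫ t in Ioi 0, rescaledIntegrand a β d s t := by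
        simp only [rescaledIntegrand]
        rw [setIntegral_indicator measurableSet_Ioo,
          inter_eq_self_of_subset_right Ioo_subset_Ioi_self]

lemma tendsto_rescaledIntegrand (a β d : ℝ) {t : ℝ} (ht : 0 < t) :
    Tendsto (fun s => rescaledIntegrand a β d s t) atTop
      (𝓝 (t ^ (a - 1) * exp (-((1 - β) * t)))) := by
  have hlim := (tendsto_one_add_div_rpow_add_exp (-t) d).const_mul (exp (β * t) * t ^ (a - 1))
  rw [show exp (β * t) * t ^ (a - 1) * exp (-t) = t ^ (a - 1) * exp (-((1 - β) * t)) by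
    rw [mul_right_comm, ← exp_add]; ring_nf] at hlim
  refine hlim.congr' ?_
  filter_upwards [eventually_gt_atTop t] with s hs
  rw [rescaledIntegrand, indicator_of_mem (show t ∈ Ioo 0 s from ⟨ht, hs⟩), neg_div,
    ← sub_eq_add_neg]

lemma norm_rescaledIntegrand_le {a β d δ s t : ℝ} (hs : 0 < s) (ht : 0 < t) (hd : 0 ≤ s + d)
    (hsd : (β + δ) * s ≤ s + d) :
    ‖rescaledIntegrand a β d s t‖ ≤ t ^ (a - 1) * exp (-(δ * t)) := by
  by_cases hts : t < s
  · have hts' : t / s < 1 := (div_lt_one hs).2 hts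
    have hdecay : (1 - t / s) ^ (s + d) ≤ exp (-((β + δ) * t)) := by
      refine (rpow_one_sub_le_exp_neg_mul hts' hd).trans (exp_le_exp.2 ?_)
      have := mul_le_mul_of_nonneg_right hsd (div_pos ht hs).le
      rw [mul_assoc, mul_div_cancel₀ _ hs.ne'] at this
      exact neg_le_neg this
    have hbase : 0 < 1 - t / s := sub_pos.2 hts'
    rw [rescaledIntegrand, indicator_of_mem (show t ∈ Ioo 0 s from ⟨ht, hts⟩),
      norm_of_nonneg (by positivity)]
    calc exp (β * t) * t ^ (a - 1) * (1 - t / s) ^ (s + d)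
        ≤ exp (β * t) * t ^ (a - 1) * exp (-((β + δ) * t)) := by gcongr
      _ = t ^ (a - 1) * exp (-(δ * t)) := by rw [mul_right_comm, ← exp_add]; ring_nf
  · rw [rescaledIntegrand, indicator_of_notMem (fun h => hts h.2), norm_zero]
    positivity

theorem tendsto_rpow_mul_integral_exp_mul_rpow_one_sub {a β : ℝ} (ha : 0 < a) (hβ : β < 1)
    (d : ℝ) :
    Tendsto (fun s : ℝ =>
        s ^ a * ∫ u in (0:ℝ)..1, exp (β * s * u) * u ^ (a - 1) * (1 - u) ^ (s + d))
      atTop (𝓝 (Gamma a * (1 - β) ^ (-a))) := by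
  set δ := (1 - β) / 2 with hδ_def
  have hδ : 0 < δ := by linarith
  have hmeas : ∀ s, AEStronglyMeasurable (rescaledIntegrand a β d s) (volume.restrict (Ioi 0)) :=
    fun s => (Measurable.indicator (by fun_prop) measurableSet_Ioo).aestronglyMeasurable
  have hbound : ∀ᶠ s in atTop, ∀ᵐ t ∂(volume.restrict (Ioi 0)),
      ‖rescaledIntegrand a β d s t‖ ≤ t ^ (a - 1) * exp (-(δ * t)) := by
    filter_upwards [eventually_gt_atTop 0, eventually_ge_atTop (-d),
      eventually_ge_atTop (-d / δ)] with s hs hsd hsδ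
    have hδs : -d ≤ δ * s := by rwa [div_le_iff₀ hδ, mul_comm] at hsδ
    have hβδ : β + δ = 1 - δ := by rw [hδ_def]; ring
    filter_upwards [self_mem_ae_restrict measurableSet_Ioi] with t ht
    exact norm_rescaledIntegrand_le hs ht (by linarith) (by rw [hβδ]; linarith)
  have hint : IntegrableOn (fun t : ℝ => t ^ (a - 1) * exp (-(δ * t))) (Ioi 0) := by
    simpa [rpow_one, neg_mul] using
      integrableOn_rpow_mul_exp_neg_mul_rpow (by linarith : -1 < a - 1) zero_lt_one hδ
  have hlim : ∀ᵐ t ∂(volume.restrict (Ioi 0)), Tendsto (fun s => rescaledIntegrand a β d s t)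
      atTop (𝓝 (t ^ (a - 1) * exp (-((1 - β) * t)))) := by
    filter_upwards [self_mem_ae_restrict measurableSet_Ioi] with t ht
    exact tendsto_rescaledIntegrand a β d ht
  have hDCT := tendsto_integral_filter_of_dominated_convergence _
    (Eventually.of_forall hmeas) hbound hint hlim
  rw [integral_rpow_mul_exp_neg_mul_Ioi ha (sub_pos.2 hβ), one_div,
    inv_rpow (sub_pos.2 hβ).le, ← rpow_neg (sub_pos.2 hβ).le, mul_comm] at hDCT
  refine hDCT.congr' ?_
  filter_upwards [eventually_gt_atTop 0] with s hs
  exact (rpow_mul_integral_eq_integral_rescaledIntegrand a β d hs).symm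

/-- Asymptotics of the confluent hypergeometric function with argument growing
proportionally to the second parameter, subcritical case: for fixed `a > 0`, `b`,
`β̃ < 1`, with
`₁F₁(a;b+n;β̃n) := (Γ(b+n)/(Γ(a)Γ(b+n-a))) ∫₀¹ e^{β̃ n u} u^{a-1}(1-u)^{b+n-a-1} du`,
one has `lim_{n→∞} ₁F₁(a;b+n;β̃n) = (1-β̃)^{-a}`. -/
theorem hyp1F1_limit_subcritical (a b βt : ℝ) (ha : 0 < a) (hβ : βt < 1) :
    Filter.Tendsto (fun n : ℕ =>
        (Real.Gamma (b + n) / (Real.Gamma a * Real.Gamma (b + n - a))) *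
          ∫ u in (0:ℝ)..1, Real.exp (βt * n * u) * u ^ (a - 1) * (1 - u) ^ (b + n - a - 1))
      Filter.atTop (𝓝 ((1 - βt) ^ (-a))) := by
  have hlaplace : ∀ β < 1, Tendsto (fun n : ℕ => (n : ℝ) ^ a *
      ∫ u in (0:ℝ)..1, exp (β * n * u) * u ^ (a - 1) * (1 - u) ^ (b + n - a - 1))
        atTop (𝓝 (Gamma a * (1 - β) ^ (-a))) := fun β hβ =>
    ((tendsto_rpow_mul_integral_exp_mul_rpow_one_sub ha hβ (b - a - 1)).comp
      tendsto_natCast_atTop_atTop).congr fun n => by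
        rw [Function.comp_apply, show (n : ℝ) + (b - a - 1) = b + n - a - 1 by ring]
  have hΓa : 0 < Gamma a := Gamma_pos_of_pos ha
  have hratio := (hlaplace βt hβ).div (hlaplace 0 zero_lt_one) (by simp [hΓa.ne'])
  rw [sub_zero, one_rpow, mul_one, mul_div_cancel_left₀ _ hΓa.ne'] at hratio
  refine hratio.congr' ?_
  filter_upwards [eventually_gt_atTop 0, tendsto_natCast_atTop_atTop.eventually_gt_atTop (a - b)]
    with n hn hnab
  have hq : 0 < b + n - a := by linarith
  have hbeta := integral_rpow_mul_one_sub_rpow ha hq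
  rw [add_sub_cancel] at hbeta
  simp only [Pi.div_apply, zero_mul, exp_zero, one_mul, hbeta]
  have hn' : (0 : ℝ) < n := by exact_mod_cast hn
  have hΓq := Gamma_pos_of_pos hq
  have hΓbn := Gamma_pos_of_pos (show 0 < b + n by linarith)
  field_simp
end

section
/- Sampling probability asymptotics under strong negative selection with fixed sample size (equation (7a) of the paper): fix θ₁, θ₂ > 0 and natural numbers n₁, n₂ with n = n₁ + n₂. Define q(n₁,n₂;β) := C(n,n₁) · I(n₁,n₂,β) / I(0,0,β), where C(n,n₁) is the binomial coefficient and I(m₁,m₂,β) := ∫₀¹ x^{θ₁+m₁-1}(1-x)^{θ₂+m₂-1} e^{βx} dx. Then lim_{β → -∞} |β|^{n₁} · q(n₁,n₂;β) = C(n,n₁) · Γ(θ₁+n₁)/Γ(θ₁). -/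
/-!
Watson's lemma for the Beta kernel: `b ^ θ * ∫₀¹ x^(θ-1) (1-x)^(τ-1) e^(-b x) dx → Γ(θ)` as
`b → ∞`. Split `[0, 1]` at `δ = 1/√b`. On `[0, δ]` the factor `(1-x)^(τ-1)` lies between
`(1-δ)^(±|τ-1|)`, which tend to `1`, and `u = b x` turns what remains into the partial Gamma
integral up to `b δ = √b`. On `[δ, 1]` the integrand is at most `e^(-√b)` times the Beta
integrand, and `b ^ θ * e^(-√b) → 0`. With `b = -β`, numerator and denominator of the sampling
probability behave like `Γ(θ₁ + n₁) |β|^(-θ₁-n₁)` and `Γ(θ₁) |β|^(-θ₁)`.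
-/

open Real Filter Topology MeasureTheory Set

lemma one_sub_rpow_mem_Icc {x δ : ℝ} (a : ℝ) (hx : 0 ≤ x) (hxδ : x ≤ δ) (hδ : δ < 1) :
    (1 - x) ^ a ∈ Icc ((1 - δ) ^ |a|) ((1 - δ) ^ (-|a|)) := by
  have hlog : log (1 - δ) ≤ log (1 - x) := log_le_log (by linarith) (by linarith)
  have hlog0 : log (1 - x) ≤ 0 := log_nonpos (by linarith) (by linarith)
  rw [mem_Icc, rpow_def_of_pos (by linarith), rpow_def_of_pos (by linarith),
    rpow_def_of_pos (by linarith), exp_le_exp, exp_le_exp]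
  rcases abs_cases a with ⟨ha, ha0⟩ | ⟨ha, ha0⟩ <;> rw [ha] <;> constructor <;> nlinarith

lemma rpow_mul_integral_rpow_mul_exp_neg_mul {b : ℝ} (θ : ℝ) (hb : 0 < b) {δ : ℝ} (hδ : 0 ≤ δ) :
    b ^ θ * ∫ x in (0:ℝ)..δ, x ^ (θ - 1) * exp (-(b * x)) =
      ∫ u in (0:ℝ)..b * δ, exp (-u) * u ^ (θ - 1) := by
  have hsub := intervalIntegral.integral_comp_mul_left (fun u : ℝ => exp (-u) * u ^ (θ - 1))
    (a := 0) (b := δ) hb.ne'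
  rw [mul_zero, smul_eq_mul, eq_inv_mul_iff_mul_eq₀ hb.ne'] at hsub
  rw [← hsub, ← intervalIntegral.integral_const_mul, ← intervalIntegral.integral_const_mul]
  refine intervalIntegral.integral_congr fun x hx => ?_
  rw [uIcc_of_le hδ] at hx
  simp only [mul_rpow hb.le hx.1, rpow_sub_one hb.ne']
  field_simp

lemma intervalIntegrable_rpow_mul_one_sub_rpow_zero_half {θ : ℝ} (hθ : 0 < θ) (τ : ℝ) :
    IntervalIntegrable (fun x : ℝ => x ^ (θ - 1) * (1 - x) ^ (τ - 1)) volume 0 (1/2) := by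
  refine (intervalIntegral.intervalIntegrable_rpow' (by linarith)).mul_continuousOn
    fun x hx => ?_
  rw [uIcc_of_le (by norm_num)] at hx
  exact (ContinuousAt.rpow_const (by fun_prop) (.inl (by linarith [hx.2]))).continuousWithinAt

lemma intervalIntegrable_rpow_mul_one_sub_rpow_s8 {θ τ : ℝ} (hθ : 0 < θ) (hτ : 0 < τ) :
    IntervalIntegrable (fun x : ℝ => x ^ (θ - 1) * (1 - x) ^ (τ - 1)) volume 0 1 := by
  refine (intervalIntegrable_rpow_mul_one_sub_rpow_zero_half hθ τ).trans ?_
  have hmirror := (intervalIntegrable_rpow_mul_one_sub_rpow_zero_half hτ θ).comp_sub_left 1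
  norm_num [mul_comm] at hmirror
  exact hmirror.symm

lemma integral_rpow_mul_one_sub_rpow_mul_exp_mem_Icc {θ : ℝ} (hθ : 0 < θ) (τ b : ℝ) {δ : ℝ}
    (hδ0 : 0 ≤ δ) (hδ1 : δ < 1) :
    ∫ x in (0:ℝ)..δ, x ^ (θ - 1) * (1 - x) ^ (τ - 1) * exp (-(b * x)) ∈
      Icc ((1 - δ) ^ |τ - 1| * ∫ x in (0:ℝ)..δ, x ^ (θ - 1) * exp (-(b * x)))
        ((1 - δ) ^ (-|τ - 1|) * ∫ x in (0:ℝ)..δ, x ^ (θ - 1) * exp (-(b * x))) := by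
  have hpow : IntervalIntegrable (fun x : ℝ => x ^ (θ - 1)) volume 0 δ :=
    intervalIntegral.intervalIntegrable_rpow' (by linarith)
  have hp : IntervalIntegrable (fun x : ℝ => x ^ (θ - 1) * exp (-(b * x))) volume 0 δ :=
    hpow.mul_continuousOn (by fun_prop)
  have hf : IntervalIntegrable (fun x : ℝ => x ^ (θ - 1) * (1 - x) ^ (τ - 1) * exp (-(b * x)))
      volume 0 δ := by
    have hcont : ContinuousOn (fun x : ℝ => (1 - x) ^ (τ - 1) * exp (-(b * x))) (uIcc 0 δ) := by
      rw [uIcc_of_le hδ0]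
      exact fun x hx => ((ContinuousAt.rpow_const (by fun_prop)
        (.inl (by linarith [hx.2]))).mul (by fun_prop)).continuousWithinAt
    simpa only [mul_assoc] using hpow.mul_continuousOn hcont
  have hrewrite : ∀ x : ℝ, x ^ (θ - 1) * (1 - x) ^ (τ - 1) * exp (-(b * x)) =
      (1 - x) ^ (τ - 1) * (x ^ (θ - 1) * exp (-(b * x))) := fun x => by ring
  have hp0 : ∀ x ∈ Icc 0 δ, 0 ≤ x ^ (θ - 1) * exp (-(b * x)) := fun x hx =>
    mul_nonneg (rpow_nonneg hx.1 _) (exp_pos _).le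
  rw [← intervalIntegral.integral_const_mul, ← intervalIntegral.integral_const_mul]
  constructor
  · refine intervalIntegral.integral_mono_on hδ0 (hp.const_mul _) hf fun x hx => ?_
    rw [hrewrite]
    exact mul_le_mul_of_nonneg_right (one_sub_rpow_mem_Icc _ hx.1 hx.2 hδ1).1 (hp0 x hx)
  · refine intervalIntegral.integral_mono_on hδ0 hf (hp.const_mul _) fun x hx => ?_
    rw [hrewrite]
    exact mul_le_mul_of_nonneg_right (one_sub_rpow_mem_Icc _ hx.1 hx.2 hδ1).2 (hp0 x hx)

lemma integral_rpow_mul_one_sub_rpow_mul_exp_le_exp_mul_integral {θ τ b δ : ℝ} (hθ : 0 < θ)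
    (hτ : 0 < τ) (hb : 0 ≤ b) (hδ0 : 0 ≤ δ) (hδ1 : δ ≤ 1) :
    ∫ x in δ..1, x ^ (θ - 1) * (1 - x) ^ (τ - 1) * exp (-(b * x)) ≤
      exp (-(b * δ)) * ∫ x in (0:ℝ)..1, x ^ (θ - 1) * (1 - x) ^ (τ - 1) := by
  have hg := intervalIntegrable_rpow_mul_one_sub_rpow_s8 hθ hτ
  have hsub : uIcc δ 1 ⊆ uIcc 0 1 := by
    rw [uIcc_of_le hδ1, uIcc_of_le zero_le_one]
    exact Icc_subset_Icc hδ0 le_rfl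
  have hg0 : ∀ x ∈ Icc (0:ℝ) 1, 0 ≤ x ^ (θ - 1) * (1 - x) ^ (τ - 1) := fun x hx =>
    mul_nonneg (rpow_nonneg hx.1 _) (rpow_nonneg (by linarith [hx.2]) _)
  calc ∫ x in δ..1, x ^ (θ - 1) * (1 - x) ^ (τ - 1) * exp (-(b * x))
      ≤ ∫ x in δ..1, exp (-(b * δ)) * (x ^ (θ - 1) * (1 - x) ^ (τ - 1)) := by
        refine intervalIntegral.integral_mono_on hδ1
          ((hg.mono_set hsub).mul_continuousOn (by fun_prop))
          ((hg.mono_set hsub).const_mul _) fun x hx => ?_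
        rw [mul_comm (exp _)]
        refine mul_le_mul_of_nonneg_left (exp_le_exp.2 ?_) (hg0 x ⟨hδ0.trans hx.1, hx.2⟩)
        linarith [mul_le_mul_of_nonneg_left hx.1 hb]
    _ ≤ exp (-(b * δ)) * ∫ x in (0:ℝ)..1, x ^ (θ - 1) * (1 - x) ^ (τ - 1) := by
        rw [intervalIntegral.integral_const_mul]
        refine mul_le_mul_of_nonneg_left (intervalIntegral.integral_mono_interval hδ0 hδ1 le_rfl
          ?_ hg) (exp_pos _).le
        exact (ae_restrict_mem measurableSet_Ioc).mono fun x hx => hg0 x (Ioc_subset_Icc_self hx)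

lemma rpow_mul_integral_rpow_mul_one_sub_rpow_mul_exp_mem_Icc {θ τ b δ : ℝ} (hθ : 0 < θ)
    (hτ : 0 < τ) (hb : 0 < b) (hδ0 : 0 ≤ δ) (hδ1 : δ < 1) :
    b ^ θ * ∫ x in (0:ℝ)..1, x ^ (θ - 1) * (1 - x) ^ (τ - 1) * exp (-(b * x)) ∈
      Icc ((1 - δ) ^ |τ - 1| * ∫ u in (0:ℝ)..b * δ, exp (-u) * u ^ (θ - 1))
        ((1 - δ) ^ (-|τ - 1|) * (∫ u in (0:ℝ)..b * δ, exp (-u) * u ^ (θ - 1)) +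
          b ^ θ * exp (-(b * δ)) * ∫ x in (0:ℝ)..1, x ^ (θ - 1) * (1 - x) ^ (τ - 1)) := by
  have hf : IntervalIntegrable (fun x : ℝ => x ^ (θ - 1) * (1 - x) ^ (τ - 1) * exp (-(b * x)))
      volume 0 1 :=
    (intervalIntegrable_rpow_mul_one_sub_rpow_s8 hθ hτ).mul_continuousOn (by fun_prop)
  rw [← intervalIntegral.integral_add_adjacent_intervals (b := δ)
      (hf.mono_set (uIcc_subset_uIcc_left (by simp [uIcc_of_le, hδ0, hδ1.le])))
      (hf.mono_set (uIcc_subset_uIcc_right (by simp [uIcc_of_le, hδ0, hδ1.le]))),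
    ← rpow_mul_integral_rpow_mul_exp_neg_mul θ hb hδ0]
  obtain ⟨hhead_ge, hhead_le⟩ := integral_rpow_mul_one_sub_rpow_mul_exp_mem_Icc hθ τ b hδ0 hδ1
  have htail_le :=
    integral_rpow_mul_one_sub_rpow_mul_exp_le_exp_mul_integral hθ hτ hb.le hδ0 hδ1.le
  have htail_nonneg : 0 ≤ ∫ x in δ..1, x ^ (θ - 1) * (1 - x) ^ (τ - 1) * exp (-(b * x)) :=
    intervalIntegral.integral_nonneg hδ1.le fun x hx =>
      mul_nonneg (mul_nonneg (rpow_nonneg (hδ0.trans hx.1) _)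
        (rpow_nonneg (by linarith [hx.2]) _)) (exp_pos _).le
  have hbθ : 0 ≤ b ^ θ := by positivity
  constructor
  · nlinarith [mul_le_mul_of_nonneg_left hhead_ge hbθ]
  · nlinarith [mul_le_mul_of_nonneg_left hhead_le hbθ, mul_le_mul_of_nonneg_left htail_le hbθ]

lemma tendsto_rpow_mul_integral_rpow_mul_one_sub_rpow_mul_exp_neg_mul {θ τ : ℝ} (hθ : 0 < θ)
    (hτ : 0 < τ) :
    Tendsto (fun b : ℝ =>
        b ^ θ * ∫ x in (0:ℝ)..1, x ^ (θ - 1) * (1 - x) ^ (τ - 1) * exp (-(b * x)))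
      atTop (𝓝 (Gamma θ)) := by
  have hpartial : Tendsto (fun b : ℝ => ∫ u in (0:ℝ)..√b, exp (-u) * u ^ (θ - 1)) atTop
      (𝓝 (Gamma θ)) := by
    rw [Gamma_eq_integral hθ]
    exact intervalIntegral_tendsto_integral_Ioi 0 (GammaIntegral_convergent hθ)
      tendsto_sqrt_atTop
  have hshrink : Tendsto (fun b : ℝ => 1 - (√b)⁻¹) atTop (𝓝 1) := by
    simpa using tendsto_const_nhds.sub tendsto_sqrt_atTop.inv_tendsto_atTop
  have hexp : Tendsto (fun b : ℝ => b ^ θ * exp (-√b)) atTop (𝓝 0) := by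
    refine ((tendsto_rpow_mul_exp_neg_mul_atTop_nhds_zero (2 * θ) 1 one_pos).comp
      tendsto_sqrt_atTop).congr' ?_
    filter_upwards [eventually_ge_atTop 0] with b hb
    simp [rpow_mul (sqrt_nonneg b), sq_sqrt hb]
  have hlower := (hshrink.rpow_const (p := |τ - 1|) (.inl one_ne_zero)).mul hpartial
  have hupper := ((hshrink.rpow_const (p := -|τ - 1|) (.inl one_ne_zero)).mul hpartial).add
    (hexp.mul_const (∫ x in (0:ℝ)..1, x ^ (θ - 1) * (1 - x) ^ (τ - 1)))
  simp only [one_rpow, one_mul, zero_mul, add_zero] at hlower hupper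
  have hbounds := eventually_gt_atTop (1 : ℝ) |>.mono fun b hb => by
    have hb0 : 0 < b := by linarith
    have hbδ : b * (√b)⁻¹ = √b := by
      rw [← div_eq_mul_inv, div_eq_iff (sqrt_pos.2 hb0).ne', mul_self_sqrt hb0.le]
    have hδ1 : (√b)⁻¹ < 1 := inv_lt_one_of_one_lt₀ (by simpa using sqrt_lt_sqrt zero_le_one hb)
    simpa only [hbδ] using rpow_mul_integral_rpow_mul_one_sub_rpow_mul_exp_mem_Icc hθ hτ hb0
      (inv_nonneg.2 (sqrt_nonneg b)) hδ1
  exact tendsto_of_tendsto_of_tendsto_of_le_of_le' hlower hupper (hbounds.mono fun _ h => h.1)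
    (hbounds.mono fun _ h => h.2)

/-- Sampling probability asymptotics under strong negative selection with fixed
sample size (eq. (7a)): with
`q(n₁,n₂;β) = C(n,n₁)·I(n₁,n₂,β)/I(0,0,β)` where
`I(m₁,m₂,β) = ∫₀¹ x^{θ₁+m₁-1}(1-x)^{θ₂+m₂-1}e^{βx} dx`,
one has `lim_{β→-∞} |β|^{n₁} q(n₁,n₂;β) = C(n,n₁)·Γ(θ₁+n₁)/Γ(θ₁)`. -/
theorem sampling_prob_strong_neg_selection (θ₁ θ₂ : ℝ) (hθ₁ : 0 < θ₁) (hθ₂ : 0 < θ₂)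
    (n₁ n₂ : ℕ) :
    Filter.Tendsto (fun β : ℝ =>
        |β| ^ n₁ * ((Nat.choose (n₁ + n₂) n₁ : ℝ) *
          (∫ x in (0:ℝ)..1,
            x ^ (θ₁ + n₁ - 1) * (1 - x) ^ (θ₂ + n₂ - 1) * Real.exp (β * x)) /
          (∫ x in (0:ℝ)..1, x ^ (θ₁ - 1) * (1 - x) ^ (θ₂ - 1) * Real.exp (β * x))))
      Filter.atBot
      (𝓝 ((Nat.choose (n₁ + n₂) n₁ : ℝ) * Real.Gamma (θ₁ + n₁) / Real.Gamma θ₁)) := by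
  have hnum := (tendsto_rpow_mul_integral_rpow_mul_one_sub_rpow_mul_exp_neg_mul
    (θ := θ₁ + n₁) (τ := θ₂ + n₂) (by positivity) (by positivity)).comp tendsto_neg_atBot_atTop
  have hden := (tendsto_rpow_mul_integral_rpow_mul_one_sub_rpow_mul_exp_neg_mul hθ₁ hθ₂).comp
    tendsto_neg_atBot_atTop
  rw [mul_div_assoc]
  refine ((hnum.div hden (Gamma_pos_of_pos hθ₁).ne').const_mul _).congr' ?_
  filter_upwards [eventually_lt_atBot 0] with β hβ
  have hβ' : 0 < -β := neg_pos.2 hβ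
  simp only [Pi.div_apply, Function.comp_apply, neg_mul, neg_neg, rpow_add hβ', rpow_natCast,
    abs_of_neg hβ]
  field_simp
end

section
/- Lemma 2.1(iii), supercritical case, of the paper: fix θ₁, θ₂ > 0, a natural number n₁, and β̃ > 1. For each natural number n₂ set β = β̃·n₂ and let φ_β^{(n₁,n₂)}(x) := x^{θ₁+n₁-1}(1-x)^{θ₂+n₂-1}e^{βx} / I(n₁,n₂,β), where I(n₁,n₂,β) := ∫₀¹ x^{θ₁+n₁-1}(1-x)^{θ₂+n₂-1}e^{βx} dx. Then the probability measures φ_{β̃n₂}^{(n₁,n₂)}(x) dx on [0,1] converge weakly to the Dirac measure δ_{1-1/β̃} as n₂ → ∞; equivalently, for every bounded continuous function f : [0,1] → ℝ, lim_{n₂→∞} ∫₀¹ f(x) φ_{β̃n₂}^{(n₁,n₂)}(x) dx = f(1 - 1/β̃). -/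
/-!
On `(0,1)` the unnormalised posterior density factors as `p(x) q(x)^{n₂}` with the Beta weight
`p(x) = x^{θ₁+n₁-1} (1-x)^{θ₂-1}`, integrable on `[0,1]`, and `q(x) = (1-x) e^{β̃x}`. Writing
`t = β̃x - β̃ + 1`, one has `q(x) = e^{β̃-1}/β̃ · (1-t)e^t`, and `(1-t)e^t < 1` for `t ≠ 0` since
`e^{-t} > 1-t`; so `q` has a unique strict maximum on `[0,1]` at `1 - 1/β̃`. Laplace's method
(Mathlib's peak-function theorem, applied to the measure `p dx`) then concentrates the normalised
weights `p q^{n₂}` at that point.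
-/

open Real Filter Topology MeasureTheory Set

theorem integrableOn_rpow_mul_one_sub_rpow {a b : ℝ} (ha : -1 < a) (hb : -1 < b) :
    IntegrableOn (fun x : ℝ => x ^ a * (1 - x) ^ b) (Icc 0 1) := by
  have h := (Complex.betaIntegral_convergent (u := a + 1) (v := b + 1)
    (by simp; linarith) (by simp; linarith)).norm
  rw [intervalIntegrable_iff_integrableOn_Ioo_of_le zero_le_one] at h
  rw [integrableOn_Icc_iff_integrableOn_Ioo]
  refine h.congr_fun (fun x hx => ?_) measurableSet_Ioo
  have h1 : (1 - (x : ℂ)) = ((1 - x : ℝ) : ℂ) := by push_cast; ring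
  simp only [add_sub_cancel_right, norm_mul, h1]
  rw [Complex.norm_cpow_eq_rpow_re_of_pos hx.1,
    Complex.norm_cpow_eq_rpow_re_of_pos (by linarith [hx.2])]
  simp

theorem one_sub_mul_exp_lt_one {t : ℝ} (ht : t ≠ 0) : (1 - t) * exp t < 1 := by
  have h := add_one_lt_exp (neg_ne_zero.2 ht)
  calc (1 - t) * exp t < exp (-t) * exp t := by gcongr; linarith
    _ = 1 := by rw [← exp_add, neg_add_cancel, exp_zero]

theorem one_sub_mul_exp_mul_lt {β x : ℝ} (hβ : 0 < β) (hx : x ≠ 1 - 1 / β) :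
    (1 - x) * exp (β * x) < (1 - (1 - 1 / β)) * exp (β * (1 - 1 / β)) := by
  set t := β * x - β + 1
  have ht : t ≠ 0 := by
    contrapose! hx
    field_simp
    linarith
  calc (1 - x) * exp (β * x) = exp (β - 1) / β * ((1 - t) * exp t) := by
        rw [show β * x = (β - 1) + t by ring, exp_add]
        field_simp
        ring
    _ < exp (β - 1) / β * 1 := by gcongr; exact one_sub_mul_exp_lt_one ht
    _ = (1 - (1 - 1 / β)) * exp (β * (1 - 1 / β)) := by
        rw [show β * (1 - 1 / β) = β - 1 by field_simp]
        ring

theorem tendsto_setIntegral_mul_pow_mul_div_of_unique_maximum {α : Type*} [TopologicalSpace α]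
    [TopologicalSpace.MetrizableSpace α] [MeasurableSpace α] [BorelSpace α] {μ : Measure α}
    {s : Set α} {x₀ : α} {p c g : α → ℝ} (hs : IsCompact s) (hp : IntegrableOn p s μ)
    (hp₀ : ∀ x ∈ s, 0 ≤ p x) (hpμ : ∀ u, IsOpen u → x₀ ∈ u → 0 < ∫ x in u ∩ s, p x ∂μ)
    (hc : ContinuousOn c s) (h'c : ∀ y ∈ s, y ≠ x₀ → c y < c x₀) (hnc : ∀ x ∈ s, 0 ≤ c x)
    (hnc₀ : 0 < c x₀) (h₀ : x₀ ∈ s) (hg : ContinuousOn g s) :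
    Tendsto (fun n : ℕ => (∫ x in s, p x * c x ^ n * g x ∂μ) / ∫ x in s, p x * c x ^ n ∂μ)
      atTop (𝓝 (g x₀)) := by
  set ν := (μ.restrict s).withDensity fun x => ENNReal.ofReal (p x)
  have : IsFiniteMeasure ν := isFiniteMeasure_withDensity_ofReal hp.hasFiniteIntegral
  have hs' := hs.measurableSet
  have hp_meas : AEMeasurable (fun x => ENNReal.ofReal (p x)) (μ.restrict s) :=
    hp.aestronglyMeasurable.aemeasurable.ennreal_ofReal
  have integral_withDensity_p (F : α → ℝ) : ∫ x in s, F x ∂ν = ∫ x in s, p x * F x ∂μ := by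
    rw [restrict_withDensity hs', Measure.restrict_restrict_of_subset subset_rfl,
      integral_withDensity_eq_integral_toReal_smul₀ hp_meas
      (ae_of_all _ fun _ => ENNReal.ofReal_lt_top)]
    refine setIntegral_congr_fun hs' fun x hx => ?_
    simp [ENNReal.toReal_ofReal (hp₀ x hx)]
  have hν : ∀ u, IsOpen u → x₀ ∈ u → 0 < ν (u ∩ s) := by
    intro u hu hx₀
    have hus := hu.measurableSet.inter hs'
    rw [withDensity_apply _ hus, Measure.restrict_restrict hus, inter_assoc, inter_self,
      ← ofReal_integral_eq_lintegral_ofReal (hp.mono_set inter_subset_right)]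
    · exact ENNReal.ofReal_pos.2 (hpμ u hu hx₀)
    · exact (ae_restrict_iff' hus).2 (ae_of_all _ fun x hx => hp₀ x hx.2)
  have := tendsto_setIntegral_pow_smul_of_unique_maximum_of_isCompact_of_measure_nhdsWithin_pos
    hs hν hc h'c hnc hnc₀ h₀ (hg.integrableOn_compact hs) (hg x₀ h₀)
  simp only [integral_withDensity_p, smul_eq_mul] at this
  refine this.congr fun n => ?_
  simp only [mul_assoc, div_eq_inv_mul]

theorem setIntegral_inter_Icc_pos {p : ℝ → ℝ} {a b x₀ : ℝ} {u : Set ℝ}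
    (hp : IntegrableOn p (Icc a b)) (hp₀ : ∀ x ∈ Icc a b, 0 ≤ p x)
    (hp_pos : ∀ x ∈ Ioo a b, 0 < p x) (hx₀ : x₀ ∈ Ioo a b) (hu : IsOpen u) (hx₀u : x₀ ∈ u) :
    0 < ∫ x in u ∩ Icc a b, p x := by
  have hmeas := hu.measurableSet.inter (measurableSet_Icc (a := a) (b := b))
  rw [setIntegral_pos_iff_support_of_nonneg_ae
    ((ae_restrict_iff' hmeas).2 (ae_of_all _ fun x hx => hp₀ x hx.2))
    (hp.mono_set inter_subset_right)]
  calc 0 < volume (u ∩ Ioo a b) := (hu.inter isOpen_Ioo).measure_pos volume ⟨x₀, hx₀u, hx₀⟩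
    _ ≤ volume (Function.support p ∩ (u ∩ Icc a b)) :=
      measure_mono fun x hx => ⟨(hp_pos x hx.2).ne', hx.1, Ioo_subset_Icc_self hx.2⟩

theorem intervalIntegral_mul_div_integral_eq {f w v : ℝ → ℝ} {a b : ℝ} (hab : a ≤ b)
    (hwv : EqOn w v (Ioo a b)) :
    ∫ x in a..b, f x * (w x / ∫ y in a..b, w y) =
      (∫ x in Icc a b, v x * f x) / ∫ x in Icc a b, v x := by
  simp only [intervalIntegral.integral_of_le hab, integral_Ioc_eq_integral_Ioo,
    integral_Icc_eq_integral_Ioo, setIntegral_congr_fun measurableSet_Ioo hwv, ← integral_div]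
  refine setIntegral_congr_fun measurableSet_Ioo fun x hx => ?_
  rw [hwv hx]
  ring

theorem rpow_mul_one_sub_rpow_mul_exp_eq {a b β x : ℝ} (n : ℕ) (hx : x < 1) :
    x ^ a * (1 - x) ^ (b + n - 1) * exp (β * n * x) =
      x ^ a * (1 - x) ^ (b - 1) * ((1 - x) * exp (β * x)) ^ n := by
  rw [show b + n - 1 = (b - 1) + n by ring, rpow_add (by linarith), rpow_natCast,
    show β * n * x = n * (β * x) by ring, exp_nat_mul, mul_pow]
  ring

/-- Lemma 2.1(iii), supercritical case: with `β = β̃·n₂`, `β̃ > 1`, the posterior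
density `φ_{β̃n₂}^{(n₁,n₂)}(x) = x^{θ₁+n₁-1}(1-x)^{θ₂+n₂-1}e^{β̃n₂x}/I(n₁,n₂,β̃n₂)`
on `[0,1]` converges weakly to the Dirac measure `δ_{1-1/β̃}` as `n₂ → ∞`: for
every bounded continuous test function `f` on `[0,1]`,
`lim_{n₂→∞} ∫₀¹ f(x) φ_{β̃n₂}^{(n₁,n₂)}(x) dx = f(1-1/β̃)`. -/
theorem posterior_weak_conv_supercritical (θ₁ θ₂ βt : ℝ)
    (hθ₁ : 0 < θ₁) (hθ₂ : 0 < θ₂) (hβ : 1 < βt) (n₁ : ℕ)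
    (f : ℝ → ℝ) (hf : ContinuousOn f (Set.Icc 0 1)) :
    Filter.Tendsto (fun n₂ : ℕ =>
        ∫ x in (0:ℝ)..1,
          f x * (x ^ (θ₁ + n₁ - 1) * (1 - x) ^ (θ₂ + n₂ - 1) * Real.exp (βt * n₂ * x) /
            ∫ y in (0:ℝ)..1,
              y ^ (θ₁ + n₁ - 1) * (1 - y) ^ (θ₂ + n₂ - 1) * Real.exp (βt * n₂ * y)))
      Filter.atTop (𝓝 (f (1 - 1/βt))) := by
  have ha : -1 < θ₁ + n₁ - 1 := by linarith [n₁.cast_nonneg (α := ℝ)]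
  have hβ₀ : 0 < βt := by linarith
  have hx₀ : 1 - 1 / βt ∈ Ioo (0 : ℝ) 1 :=
    ⟨by linarith [(div_lt_one hβ₀).2 hβ], by linarith [one_div_pos.2 hβ₀]⟩
  have hp₀ (x : ℝ) (hx : x ∈ Icc (0 : ℝ) 1) : 0 ≤ x ^ (θ₁ + n₁ - 1) * (1 - x) ^ (θ₂ - 1) := by
    have := sub_nonneg.2 hx.2
    have := hx.1
    positivity
  have hp_pos (x : ℝ) (hx : x ∈ Ioo (0 : ℝ) 1) : 0 < x ^ (θ₁ + n₁ - 1) * (1 - x) ^ (θ₂ - 1) := by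
    have := sub_pos.2 hx.2
    have := hx.1
    positivity
  have hp := integrableOn_rpow_mul_one_sub_rpow ha (by linarith : -1 < θ₂ - 1)
  refine (tendsto_setIntegral_mul_pow_mul_div_of_unique_maximum isCompact_Icc hp hp₀
    (fun u hu hx₀u => setIntegral_inter_Icc_pos hp hp₀ hp_pos hx₀ hu hx₀u)
    (by fun_prop : Continuous fun x : ℝ => (1 - x) * exp (βt * x)).continuousOn
    (fun y _ hy => one_sub_mul_exp_mul_lt hβ₀ hy)
    (fun x hx => by have := sub_nonneg.2 hx.2; positivity)
    (by have := sub_pos.2 hx₀.2; positivity) (Ioo_subset_Icc_self hx₀) hf).congr fun n => ?_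
  exact (intervalIntegral_mul_div_integral_eq zero_le_one
    fun x hx => rpow_mul_one_sub_rpow_mul_exp_eq n hx.2).symm
end
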